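/- Let m ≥ 6 be even and T ⊆ {1,…,m−1} admissible with #T = 3 and Δ_m(T) = 6. Then T = {a, m/2, m/2 + a} for some a with 1 ≤ a < m/2 and a ≠ m/4. -/

import Mathlib

/-- A finite set `T ⊆ {1,…,m−1}` is admissible if no nonempty subset has sum divisible
by `m`. -/
def Admissible (m : ℕ) (T : Finset ℕ) : Prop :=
  T ⊆ Finset.Icc 1 (m - 1) ∧ ∀ U ⊆ T, U.Nonempty → ¬ m ∣ U.sum id

/-- The diversity: the number of residue classes mod `m` represented by subset sums. -/
def diversity (m : ℕ) (T : Finset ℕ) : ℕ :=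
  (T.powerset.image (fun U => U.sum id % m)).card

/-!
Let `T = {x, y, z}`. Two distinct subsets of `T` with the same sum mod `m` have disjoint
nonempty differences with equal sums, which for three elements means that one element is
congruent to the sum of the other two; admissibility rules out every other coincidence.
Each such relation merges exactly one pair of the eight subset sums, so `Δ_m(T) = 6` forces
two of them, say `y ≡ x + z` and `z ≡ x + y`. Then `2x ≡ 0`, so `x = m/2` and
`{y, z} = {a, m/2 + a}`; finally `a ≠ m/4`, since otherwise `y + z = m`.
-/

open Finset

section SubsetSums

variable {G : Type*} [AddCommGroup G] [DecidableEq G]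

def nonemptySums (a b c : G) : Finset G := {a, b, c, a + b, a + c, b + c, a + b + c}

theorem nonemptySums_swap_right (a b c : G) : nonemptySums a c b = nonemptySums a b c := by
  ext t; simp only [nonemptySums, mem_insert, mem_singleton]; grind

theorem nonemptySums_rotate (a b c : G) : nonemptySums b c a = nonemptySums a b c := by
  ext t; simp only [nonemptySums, mem_insert, mem_singleton]; grind

theorem image_sum_powerset_erase_empty {α : Type*} [DecidableEq α] {x y z : α}
    (hxy : x ≠ y) (hxz : x ≠ z) (hyz : y ≠ z) (f : α → G) :
    (({x, y, z} : Finset α).powerset.erase ∅).image (fun U => U.sum f)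
      = nonemptySums (f x) (f y) (f z) := by
  have hp : ({x, y, z} : Finset α).powerset.erase ∅
      = {{x}, {y}, {z}, {x, y}, {x, z}, {y, z}, {x, y, z}} := by
    rw [powerset_insert, powerset_insert, show ({z} : Finset α).powerset = {∅, {z}} from rfl]
    ext U
    rcases eq_or_ne U ∅ with rfl | hU
    · simp [eq_comm (a := (∅ : Finset α))]
    · simp [hU]
      tauto
  simp [hp, nonemptySums, hxy, hxz, hyz, add_assoc]

theorem image_sum_powerset_eq_insert_zero {α : Type*} [DecidableEq α] {x y z : α}
    (hxy : x ≠ y) (hxz : x ≠ z) (hyz : y ≠ z) (f : α → G) :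
    ({x, y, z} : Finset α).powerset.image (fun U => U.sum f)
      = insert 0 (nonemptySums (f x) (f y) (f z)) := by
  conv_lhs => rw [← insert_erase (empty_mem_powerset {x, y, z})]
  rw [image_insert, sum_empty, image_sum_powerset_erase_empty hxy hxz hyz f]

/-- The seven subset sums other than `a + b` can only coincide through `a = b + c` or
`b = a + c`. -/
theorem eq_add_or_eq_add_of_card_le_six {a b c : G} (h0 : 0 ∉ nonemptySums a b c)
    (hab : a ≠ b) (hac : a ≠ c) (hbc : b ≠ c)
    (h6 : (insert 0 (nonemptySums a b c)).card ≤ 6) : a = b + c ∨ b = a + c := by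
  by_contra! h
  obtain ⟨ha, hb⟩ := h
  simp only [nonemptySums, mem_insert, mem_singleton, not_or] at h0
  have h7 : ({0, a, b, c, a + c, b + c, a + b + c} : Finset G).card = 7 := by
    repeat rw [card_insert_of_notMem (by simp only [mem_insert, mem_singleton]; grind)]
    rfl
  have hsub : ({0, a, b, c, a + c, b + c, a + b + c} : Finset G)
      ⊆ insert 0 (nonemptySums a b c) := by
    simp only [nonemptySums, insert_subset_iff, mem_insert, mem_singleton, true_or, or_true,
      and_self, singleton_subset_iff]
  have := card_le_card hsub
  omega

theorem pivot_of_card_le_six {a b c : G} (h0 : 0 ∉ nonemptySums a b c)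
    (hab : a ≠ b) (hac : a ≠ c) (hbc : b ≠ c)
    (h6 : (insert 0 (nonemptySums a b c)).card ≤ 6) :
    (b = a + c ∧ c = a + b) ∨ (a = b + c ∧ c = b + a) ∨ (a = c + b ∧ b = c + a) := by
  have h₁ := eq_add_or_eq_add_of_card_le_six h0 hab hac hbc h6
  rw [← nonemptySums_swap_right] at h0 h6
  have h₂ := eq_add_or_eq_add_of_card_le_six h0 hac hab hbc.symm h6
  rw [nonemptySums_swap_right, ← nonemptySums_rotate] at h0 h6
  have h₃ := eq_add_or_eq_add_of_card_le_six h0 hbc hab.symm hac.symm h6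
  grind

end SubsetSums

theorem eq_or_eq_add_of_modEq {m a b : ℕ} (h : a ≡ b [MOD m]) (ha : a < m) (hb : b < 2 * m) :
    b = a ∨ b = a + m := by
  have hdiv := Nat.div_add_mod b m
  have hq : b / m < 2 := Nat.div_lt_of_lt_mul (by omega)
  rw [← h, Nat.mod_eq_of_lt ha] at hdiv
  interval_cases b / m <;> omega

theorem natCast_zmod_injOn_Iio (m : ℕ) : Set.InjOn (Nat.cast : ℕ → ZMod m) (Set.Iio m) :=
  fun a ha b hb h => by rw [← ZMod.val_natCast_of_lt ha, ← ZMod.val_natCast_of_lt hb, h]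

theorem exists_eq_half_of_pivot {m x y z : ℕ} (hx : x ∈ Icc 1 (m - 1))
    (hy : y ∈ Icc 1 (m - 1)) (hz : z ∈ Icc 1 (m - 1))
    (hyx : (y : ZMod m) = x + z) (hzx : (z : ZMod m) = x + y) (hyz : (y : ZMod m) + z ≠ 0) :
    ∃ a : ℕ, 1 ≤ a ∧ a < m / 2 ∧ 4 * a ≠ m ∧ ({x, y, z} : Finset ℕ) = {a, m / 2, m / 2 + a} := by
  simp only [mem_Icc] at hx hy hz
  have hx2 : 2 * x = m := by
    have h : ((0 : ℕ) : ZMod m) = ((2 * x : ℕ) : ZMod m) := by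
      push_cast; linear_combination hyx + hzx
    rcases eq_or_eq_add_of_modEq ((ZMod.natCast_eq_natCast_iff _ _ _).mp h) (by omega) (by omega)
      with h | h <;> omega
  have hm : y + z ≠ m := by
    rintro h; apply hyz; rw [← Nat.cast_add, h, ZMod.natCast_self]
  have h : (z : ZMod m) = ((x + y : ℕ) : ZMod m) := by push_cast; exact hzx
  rcases eq_or_eq_add_of_modEq ((ZMod.natCast_eq_natCast_iff _ _ _).mp h) (by omega) (by omega)
    with h | h
  · refine ⟨y, by omega, by omega, by omega, ?_⟩
    ext t; simp only [mem_insert, mem_singleton]; omega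
  · refine ⟨z, by omega, by omega, by omega, ?_⟩
    ext t; simp only [mem_insert, mem_singleton]; omega

theorem Admissible.sum_natCast_ne_zero {m : ℕ} {T U : Finset ℕ} (hT : Admissible m T)
    (hU : U ⊆ T) (hne : U.Nonempty) : ∑ n ∈ U, ((n : ℕ) : ZMod m) ≠ 0 := by
  rw [← Nat.cast_sum, Ne, ZMod.natCast_eq_zero_iff]
  exact hT.2 U hU hne

theorem diversity_eq_card_image_sum_natCast (m : ℕ) [NeZero m] (T : Finset ℕ) :
    diversity m T = (T.powerset.image fun U => ∑ n ∈ U, ((n : ℕ) : ZMod m)).card := by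
  calc diversity m T
      = ((T.powerset.image fun U => ∑ n ∈ U, ((n : ℕ) : ZMod m)).image ZMod.val).card := by
        rw [diversity, image_image]
        congr 1
        refine image_congr fun U _ => ?_
        rw [Function.comp_apply, ← Nat.cast_sum, ZMod.val_natCast]
        rfl
    _ = _ := card_image_of_injective _ (ZMod.val_injective m)

theorem stmt_18_general (m : ℕ) (T : Finset ℕ) (hT : Admissible m T) (hcard : T.card = 3)
    (hdiv : diversity m T = 6) :
    ∃ a : ℕ, 1 ≤ a ∧ a < m / 2 ∧ 4 * a ≠ m ∧ T = {a, m / 2, m / 2 + a} := by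
  obtain ⟨x, y, z, hxy, hxz, hyz, rfl⟩ := card_eq_three.mp hcard
  have hxI := hT.1 (by simp : x ∈ _)
  have hyI := hT.1 (by simp : y ∈ _)
  have hzI := hT.1 (by simp : z ∈ _)
  have : NeZero m := ⟨by rw [mem_Icc] at hxI; omega⟩
  have hcast : ∀ {a b : ℕ}, a ∈ Icc 1 (m - 1) → b ∈ Icc 1 (m - 1) → a ≠ b →
      (a : ZMod m) ≠ b := fun ha hb =>
    (natCast_zmod_injOn_Iio m).ne (by simp at ha; simp; omega) (by simp at hb; simp; omega)
  have h0 : 0 ∉ nonemptySums (x : ZMod m) y z := by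
    rw [← image_sum_powerset_erase_empty hxy hxz hyz]
    simp only [mem_image, mem_erase, mem_powerset, not_exists, not_and]
    exact fun U hU => hT.sum_natCast_ne_zero hU.2 (nonempty_iff_ne_empty.2 hU.1)
  have h6 : (insert 0 (nonemptySums (x : ZMod m) y z)).card ≤ 6 := by
    rw [← image_sum_powerset_eq_insert_zero hxy hxz hyz, ← diversity_eq_card_image_sum_natCast,
      hdiv]
  have hne : ∀ s ∈ nonemptySums (x : ZMod m) y z, s ≠ 0 := fun s hs h => h0 (h ▸ hs)
  rcases pivot_of_card_le_six h0 (hcast hxI hyI hxy) (hcast hxI hzI hxz) (hcast hyI hzI hyz) h6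
    with ⟨hy, hz⟩ | ⟨hx, hz⟩ | ⟨hx, hy⟩
  · exact exists_eq_half_of_pivot hxI hyI hzI hy hz (hne _ (by simp [nonemptySums]))
  · rw [insert_comm]
    exact exists_eq_half_of_pivot hyI hxI hzI hx hz (hne _ (by simp [nonemptySums]))
  · rw [pair_comm y z, insert_comm x z]
    exact exists_eq_half_of_pivot hzI hxI hyI hx hy (hne _ (by simp [nonemptySums]))

/-- For even `m ≥ 6` and `T ⊆ {1,…,m−1}` admissible with `#T = 3` and `Δ_m(T) = 6`,
we have `T = {a, m/2, m/2 + a}` for some `a` with `1 ≤ a < m/2`, `a ≠ m/4`. -/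
theorem stmt_18 (m : ℕ) (hm : 6 ≤ m) (heven : 2 ∣ m)
    (T : Finset ℕ) (hT : Admissible m T) (hcard : T.card = 3)
    (hdiv : diversity m T = 6) :
    ∃ a : ℕ, 1 ≤ a ∧ a < m / 2 ∧ 4 * a ≠ m ∧ T = {a, m / 2, m / 2 + a} :=
  stmt_18_general m T hT hcard hdiv
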